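/- Ryser's formula: for any n×n real matrix A with n ≥ 1, perm(A) = (-1)^n · Σ_{S ⊆ {1,...,n}} (-1)^{|S|} · Π_{i=1}^n (Σ_{j ∈ S} a_{ij}). -/

import Mathlib

/-!
Expanding `∏ i, ∑ j ∈ S, a i j` gives the sum of `∏ i, a i (f i)` over all maps `f` whose image
lies in `S`. Exchanging the two sums, each `f` is weighted by `∑ S ⊇ f '' univ, (-1) ^ #S`, which
vanishes unless `f` is surjective, i.e. a permutation, where it equals `(-1) ^ n`.
-/

def perm {n : ℕ} {R : Type*} [CommRing R] (A : Matrix (Fin n) (Fin n) R) : R :=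
  ∑ σ : Equiv.Perm (Fin n), ∏ i, A i (σ i)

open Finset Function

section

variable {ι κ : Type*} [Fintype ι] [DecidableEq ι]

theorem sum_ite_subset_neg_one_pow_card {R : Type*} [CommRing R] (T : Finset ι) :
    ∑ S : Finset ι, (if T ⊆ S then (-1 : R) ^ #S else 0) =
      if T = univ then (-1) ^ Fintype.card ι else 0 := by
  -- `[T ⊆ S] = ∏ i ∉ S, [i ∉ T]`, so the sum is the expansion of `∏ i, (-1 + [i ∉ T])`.
  have expand : ∏ i, (-1 + if i ∉ T then 1 else 0) =
      ∑ S : Finset ι, (-1 : R) ^ #S * if T ⊆ S then 1 else 0 := by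
    rw [prod_add, powerset_univ]
    refine sum_congr rfl fun S _ ↦ ?_
    simp only [prod_const, prod_boole, mem_sdiff, mem_univ, true_and, not_imp_not, subset_iff]
  simp only [mul_ite, mul_one, mul_zero] at expand
  rw [← expand]
  split_ifs with hT
  · simp [hT]
  · obtain ⟨j, hj⟩ := not_forall.mp (mt eq_univ_iff_forall.mpr hT)
    exact prod_eq_zero (mem_univ j) (by simp [hj])

theorem prod_sum_eq_sum_ite_image_subset {R : Type*} [CommSemiring R] [Fintype κ] [DecidableEq κ]
    (A : ι → κ → R) (S : Finset κ) :
    ∏ i, ∑ j ∈ S, A i j = ∑ f : ι → κ, if univ.image f ⊆ S then ∏ i, A i (f i) else 0 := by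
  rw [prod_univ_sum, ← sum_filter]
  congr 1
  ext f
  simp [Fintype.mem_piFinset, image_subset_iff]

theorem image_univ_eq_univ_iff_surjective [Fintype κ] {f : κ → ι} :
    univ.image f = univ ↔ Surjective f := by
  simp [eq_univ_iff_forall, Surjective]

theorem sum_perm_eq_sum_ite_bijective {M : Type*} [AddCommMonoid M] (g : (ι → ι) → M) :
    ∑ σ : Equiv.Perm ι, g σ = ∑ f : ι → ι, if Bijective f then g f else 0 := by
  rw [← sum_filter, sum_subtype _ (fun _ ↦ mem_filter_univ _)]
  exact Fintype.sum_equiv Equiv.bijectiveEquiv.symm _ _ fun _ ↦ rfl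

theorem sum_neg_one_pow_card_mul_prod_sum {R : Type*} [CommRing R] (A : ι → ι → R) :
    ∑ S : Finset ι, (-1) ^ #S * ∏ i, ∑ j ∈ S, A i j =
      (-1) ^ Fintype.card ι * ∑ σ : Equiv.Perm ι, ∏ i, A i (σ i) := by
  calc ∑ S : Finset ι, (-1) ^ #S * ∏ i, ∑ j ∈ S, A i j
      = ∑ f : ι → ι, (∏ i, A i (f i)) *
          ∑ S : Finset ι, if univ.image f ⊆ S then (-1) ^ #S else 0 := by
        simp_rw [prod_sum_eq_sum_ite_image_subset, mul_sum, mul_ite, mul_zero]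
        rw [sum_comm]
        simp_rw [mul_comm]
    _ = ∑ f : ι → ι, (∏ i, A i (f i)) * if Bijective f then (-1) ^ Fintype.card ι else 0 := by
        simp_rw [sum_ite_subset_neg_one_pow_card, image_univ_eq_univ_iff_surjective,
          Finite.surjective_iff_bijective]
    _ = (-1) ^ Fintype.card ι * ∑ σ : Equiv.Perm ι, ∏ i, A i (σ i) := by
        rw [sum_perm_eq_sum_ite_bijective fun f ↦ ∏ i, A i (f i), mul_sum]
        simp_rw [mul_ite, mul_zero, mul_comm]

end

theorem ryser_formula_general {n : ℕ} (A : Matrix (Fin n) (Fin n) ℝ) :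
    perm A =
      (-1 : ℝ) ^ n *
        ∑ S : Finset (Fin n), (-1 : ℝ) ^ S.card * ∏ i, ∑ j ∈ S, A i j := by
  rw [sum_neg_one_pow_card_mul_prod_sum A, Fintype.card_fin, ← mul_assoc, ← mul_pow]
  simp [perm]

/-- Ryser's formula. -/
theorem ryser_formula {n : ℕ} (hn : 1 ≤ n) (A : Matrix (Fin n) (Fin n) ℝ) :
    perm A =
      (-1 : ℝ) ^ n *
        ∑ S : Finset (Fin n), (-1 : ℝ) ^ S.card * ∏ i, ∑ j ∈ S, A i j :=
  ryser_formula_general A
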